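/- The function Ĩ : P([0,1]) → [0,∞] defined by Ĩ(μ) = lim_{n→∞} −ln[4^{n−1}(c_n^+(μ) − c_n^-(μ))], where c_n^+(μ) = c^+(c^{(n−1)}(μ)) and c_n^-(μ) = c^-(c^{(n−1)}(μ)) (the limit existing in [0,∞] since the sequence is nondecreasing in n), is convex: for all μ_1, μ_2 ∈ P([0,1]) and α, β > 0 with α + β = 1, Ĩ(αμ_1 + βμ_2) ≤ αĨ(μ_1) + βĨ(μ_2). Moreover, c_n^+(αμ_1 + βμ_2) − c_n^-(αμ_1 + βμ_2) ≥ α(c_n^+(μ_1) − c_n^-(μ_1)) + β(c_n^+(μ_2) − c_n^-(μ_2)) for every n. -/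

import Mathlib

/-!
Mixing measures mixes their moments, so every moment space `M_k` is convex. The fibre of
`M_{k+1}` over a convex combination of points of `M_k` therefore contains the same convex
combination of their fibres; hence `c⁺` is concave and `c⁻` convex on `M_k`, and the width
`c⁺ - c⁻` is concave. Concavity of `log` turns this into convexity of each term
`-ln (4^m (c⁺ - c⁻))` (the value `+∞` at width `0` being harmless), and `Ĩ` is their supremum.
-/

open MeasureTheory Filter Topology Matrix ProbabilityTheory
open scoped ENNReal NNReal Classical

noncomputable section

/-- The unit interval `[0,1]` as a subtype of `ℝ`. -/
abbrev I01 : Type := (Set.Icc (0:ℝ) 1)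

/-- `c_k(μ)`, the `k`-th power moment of a probability measure on `[0,1]`. -/
def momentP (μ : ProbabilityMeasure I01) (k : ℕ) : ℝ := ∫ x, (x : ℝ) ^ k ∂(μ : Measure I01)

/-- `c^{(n)}(μ) = (c_1(μ),…,c_n(μ))`, the vector of the first `n` moments. -/
def momVec (n : ℕ) (μ : ProbabilityMeasure I01) : Fin n → ℝ := fun i => momentP μ ((i : ℕ) + 1)

/-- The `n`-th moment space `M_n ⊆ ℝ^n`. -/
def Mset (n : ℕ) : Set (Fin n → ℝ) := Set.range (momVec n)

/-- `P_n`, the uniform (normalized Lebesgue) probability on `M_n`. -/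
def Pn (n : ℕ) : Measure (Fin n → ℝ) := (volume (Mset n))⁻¹ • volume.restrict (Mset n)

/-- `c^+(c) = max {t : (c,t) ∈ M_{k+1}}`. -/
def cplus {k : ℕ} (c : Fin k → ℝ) : ℝ := sSup {t : ℝ | Fin.snoc c t ∈ Mset (k + 1)}

/-- `c^-(c) = min {t : (c,t) ∈ M_{k+1}}`. -/
def cminus {k : ℕ} (c : Fin k → ℝ) : ℝ := sInf {t : ℝ | Fin.snoc c t ∈ Mset (k + 1)}

/-- The arcsine law `ν(dx) = dx / (π √(x(1-x)))` on `[0,1]`. -/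
def arcsine : Measure I01 :=
  volume.withDensity fun x => ENNReal.ofReal (1 / (Real.pi * Real.sqrt ((x:ℝ) * (1 - (x:ℝ)))))

/-- `σ_n^+(d)`: the unique probability measure with first `n` moments `d` and maximal
`(n+1)`-th moment (junk value if `d ∉ M_n`). -/
def sigmaPlus (n : ℕ) (d : Fin n → ℝ) : ProbabilityMeasure I01 :=
  if h : ∃ μ : ProbabilityMeasure I01, momVec n μ = d ∧ momentP μ (n + 1) = cplus d then h.choose
  else ⟨Measure.dirac ⟨0, Set.left_mem_Icc.mpr zero_le_one⟩, inferInstance⟩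

/-- Kullback information `K(P,Q) = ∫ log (dP/dQ) dP` if `P ≪ Q` and `log dP/dQ ∈ L¹(P)`,
`+∞` otherwise (valued in `[0,∞]`; for probability measures the integral is nonnegative). -/
def kullback (P Q : Measure I01) : ℝ≥0∞ :=
  if P ≪ Q ∧ Integrable (llr P Q) P then ENNReal.ofReal (∫ x, llr P Q x ∂P) else ⊤

/-- A sequence of (outer) measures `R n` satisfies the LDP with speed `u` and rate `I`. -/
def IsLDP {U : Type*} [TopologicalSpace U] (R : ℕ → Set U → ℝ≥0∞) (u : ℕ → ℝ) (I : U → EReal) :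
    Prop :=
  LowerSemicontinuous I ∧
  ∀ A : Set U,
    -(⨅ x ∈ interior A, I x) ≤ liminf (fun n => ((u n : ℝ) : EReal) * ENNReal.log (R n A)) atTop ∧
    limsup (fun n => ((u n : ℝ) : EReal) * ENNReal.log (R n A)) atTop ≤ -(⨅ x ∈ closure A, I x)

/-- Goodness of a rate function: all sublevel sets are compact. -/
def GoodRate {U : Type*} [TopologicalSpace U] (I : U → EReal) : Prop :=
  ∀ a : ℝ, IsCompact {x : U | I x ≤ (a : EReal)}

/-- Convexity of a rate function on `P([0,1])`, via convex combinations of measures. -/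
def ConvexRateProb (I : ProbabilityMeasure I01 → EReal) : Prop :=
  ∀ (μ μ₁ μ₂ : ProbabilityMeasure I01) (a b : ℝ), 0 ≤ a → 0 ≤ b → a + b = 1 →
    (μ : Measure I01) = ENNReal.ofReal a • (μ₁ : Measure I01) + ENNReal.ofReal b • (μ₂ : Measure I01) →
    I μ ≤ (a : EReal) * I μ₁ + (b : EReal) * I μ₂

/-- Projection keeping the first `k` coordinates (junk `0` where undefined). -/
def projk (k n : ℕ) (c : Fin n → ℝ) : Fin k → ℝ :=
  fun i => if h : (i : ℕ) < n then c ⟨i, h⟩ else 0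

/-- `c̄^{(k)}`: the vector of the first `k` moments of the arcsine law. -/
def cbar (k : ℕ) : Fin k → ℝ := fun i => ∫ x, (x : ℝ) ^ ((i : ℕ) + 1) ∂arcsine

/-- The lower-triangular matrix `A_k` with entries `a_{ij} = 2^{-2i+1} C(2i, i-j)`
(`1`-based indices). -/
def Amat (k : ℕ) : Matrix (Fin k) (Fin k) ℝ :=
  fun i j => if (j : ℕ) ≤ (i : ℕ) then
    (2 : ℝ) ^ (-(2 * (i : ℕ) + 1) : ℤ) * (Nat.choose (2 * ((i : ℕ) + 1)) ((i : ℕ) - (j : ℕ)))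
  else 0

/-- `Σ_k = (1/2) A_k A_kᵀ`. -/
def Sigmak (k : ℕ) : Matrix (Fin k) (Fin k) ℝ := (1 / 2 : ℝ) • (Amat k * (Amat k)ᵀ)

/-- `J_k(x) = (1/2) xᵀ Σ_k⁻¹ x`. -/
def Jk (k : ℕ) (x : Fin k → ℝ) : ℝ := (1 / 2 : ℝ) * (x ⬝ᵥ ((Sigmak k)⁻¹ *ᵥ x))

/-- Unnormalized beta density `x^{a-1}(1-x)^{b-1}` (natural parameters). -/
def betaDen (a b : ℕ) (x : I01) : ℝ≥0∞ :=
  ENNReal.ofReal ((x : ℝ) ^ (a - 1) * (1 - (x : ℝ)) ^ (b - 1))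

/-- The beta distribution `β(a,b)` on `[0,1]` with natural parameters. -/
def betaM (a b : ℕ) : Measure I01 :=
  (∫⁻ x, betaDen a b x ∂volume)⁻¹ • volume.withDensity (betaDen a b)

/-- `ln : ℝ → [-∞,∞]` with the convention `ln t = -∞` for `t ≤ 0`. -/
def elog (x : ℝ) : EReal := if x ≤ 0 then ⊥ else ((Real.log x : ℝ) : EReal)

/-- `exp(-x)` for `x ∈ [0,∞]`, with `exp(-∞) = 0`. -/
def expNeg (x : ℝ≥0∞) : ℝ := if x = ⊤ then 0 else Real.exp (-(x.toReal))

/-- `exp : [-∞,∞] → [0,∞]`. -/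
def expE (x : EReal) : ℝ≥0∞ :=
  if x = ⊥ then 0 else if x = ⊤ then ⊤ else ENNReal.ofReal (Real.exp x.toReal)

/-- The first `m` coordinates of `c : Fin n → ℝ` (`m ≤ n`). -/
def truncMom {n : ℕ} (c : Fin n → ℝ) (m : ℕ) (h : m ≤ n) : Fin m → ℝ :=
  fun j => c ⟨j, lt_of_lt_of_le j.2 h⟩

/-- The vector of the first `k` canonical moments of `c` (junk outside `int M_n`). -/
def canMomVec (k : ℕ) {n : ℕ} (c : Fin n → ℝ) : Fin k → ℝ := fun i =>
  if h : (i : ℕ) < n then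
    (c ⟨i, h⟩ - cminus (truncMom c i h.le)) /
      (cplus (truncMom c i h.le) - cminus (truncMom c i h.le))
  else 0

/-- `F(μ) = ∫ f₀ dμ`. -/
def F0int (f0 : C(I01, ℝ)) (μ : ProbabilityMeasure I01) : ℝ := ∫ x, f0 x ∂(μ : Measure I01)

/-- The tilted law `Q̃_n(B) = E[exp(nF(μ_n)) 1_B(μ_n)] / E[exp(nF(μ_n))]`, as a set function. -/
def Qtil (f0 : C(I01, ℝ)) (n : ℕ) (B : Set (ProbabilityMeasure I01)) : ℝ≥0∞ :=
  (∫⁻ c, ENNReal.ofReal (Real.exp (n * F0int f0 (sigmaPlus n c))) ∂(Pn n))⁻¹ *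
    ∫⁻ c in sigmaPlus n ⁻¹' B, ENNReal.ofReal (Real.exp (n * F0int f0 (sigmaPlus n c))) ∂(Pn n)

/-- `∫ ln g dν` valued in `[-∞,∞)`, with the convention `ln t = -∞` on `{t ≤ 0}`. -/
def nuLogInt (g : I01 → ℝ) : EReal :=
  ((∫⁻ x, ENNReal.ofReal (Real.log (g x)) ∂arcsine : ℝ≥0∞) : EReal) -
    ((∫⁻ x, (if g x ≤ 0 then (⊤ : ℝ≥0∞) else ENNReal.ofReal (-Real.log (g x))) ∂arcsine :
      ℝ≥0∞) : EReal)

end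

open scoped Pointwise

lemma integrable_coe_pow (ν : Measure I01) [IsFiniteMeasure ν] (k : ℕ) :
    Integrable (fun x : I01 => (x : ℝ) ^ k) ν := by
  refine (integrable_const (1 : ℝ)).mono' (continuous_subtype_val.pow k).aestronglyMeasurable ?_
  filter_upwards with x
  rw [Real.norm_eq_abs, abs_of_nonneg (pow_nonneg x.2.1 k)]
  exact pow_le_one₀ x.2.1 x.2.2

lemma momentP_mem_Icc (ν : ProbabilityMeasure I01) (k : ℕ) : momentP ν k ∈ Set.Icc (0 : ℝ) 1 := by
  refine ⟨integral_nonneg fun x => pow_nonneg x.2.1 k, ?_⟩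
  simpa [momentP] using integral_mono (integrable_coe_pow (ν : Measure I01) k)
    (integrable_const (1 : ℝ)) fun x => pow_le_one₀ x.2.1 x.2.2

lemma exists_probabilityMeasure_eq_mix {α : Type*} [MeasurableSpace α]
    (ν₁ ν₂ : ProbabilityMeasure α) {a b : ℝ} (ha : 0 ≤ a) (hb : 0 ≤ b) (hab : a + b = 1) :
    ∃ ν : ProbabilityMeasure α,
      (ν : Measure α) = ENNReal.ofReal a • (ν₁ : Measure α) + ENNReal.ofReal b • (ν₂ : Measure α) := by
  refine ⟨⟨_, ⟨?_⟩⟩, rfl⟩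
  simp only [Measure.coe_add, Measure.coe_smul, Pi.add_apply, Pi.smul_apply, measure_univ,
    smul_eq_mul, mul_one]
  rw [← ENNReal.ofReal_add ha hb, hab, ENNReal.ofReal_one]

lemma momVec_eq_of_mix {μ μ₁ μ₂ : ProbabilityMeasure I01} {a b : ℝ} (ha : 0 ≤ a) (hb : 0 ≤ b)
    (hmix : (μ : Measure I01) =
      ENNReal.ofReal a • (μ₁ : Measure I01) + ENNReal.ofReal b • (μ₂ : Measure I01)) (n : ℕ) :
    momVec n μ = a • momVec n μ₁ + b • momVec n μ₂ := by
  funext i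
  simp only [momVec, momentP, Pi.add_apply, Pi.smul_apply, smul_eq_mul]
  rw [hmix, integral_add_measure
      ((integrable_coe_pow _ _).smul_measure ENNReal.ofReal_ne_top)
      ((integrable_coe_pow _ _).smul_measure ENNReal.ofReal_ne_top),
    integral_smul_measure, integral_smul_measure,
    ENNReal.toReal_ofReal ha, ENNReal.toReal_ofReal hb, smul_eq_mul, smul_eq_mul]

lemma convex_Mset (n : ℕ) : Convex ℝ (Mset n) := by
  rintro _ ⟨ν₁, rfl⟩ _ ⟨ν₂, rfl⟩ a b ha hb hab
  obtain ⟨ν, hν⟩ := exists_probabilityMeasure_eq_mix ν₁ ν₂ ha hb hab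
  exact ⟨ν, momVec_eq_of_mix ha hb hν n⟩

lemma momVec_succ (n : ℕ) (ν : ProbabilityMeasure I01) :
    momVec (n + 1) ν = Fin.snoc (momVec n ν) (momentP ν (n + 1)) := by
  funext i
  refine Fin.lastCases ?_ (fun j => ?_) i <;> simp [momVec]

lemma Fin.snoc_smul_add_smul {k : ℕ} (c₁ c₂ : Fin k → ℝ) (t₁ t₂ a b : ℝ) :
    (Fin.snoc (a • c₁ + b • c₂) (a * t₁ + b * t₂) : Fin (k + 1) → ℝ) =
      a • Fin.snoc c₁ t₁ + b • Fin.snoc c₂ t₂ := by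
  funext i
  refine Fin.lastCases ?_ (fun j => ?_) i <;> simp

def momentFiber {k : ℕ} (c : Fin k → ℝ) : Set ℝ := {t : ℝ | Fin.snoc c t ∈ Mset (k + 1)}

lemma momentFiber_subset_Icc {k : ℕ} (c : Fin k → ℝ) : momentFiber c ⊆ Set.Icc (0 : ℝ) 1 := by
  rintro t ⟨ν, hν⟩
  have hlast : momVec (k + 1) ν (Fin.last k) = t := by rw [hν]; simp
  simpa [← hlast, momVec] using momentP_mem_Icc ν (k + 1)

lemma bddAbove_momentFiber {k : ℕ} (c : Fin k → ℝ) : BddAbove (momentFiber c) :=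
  bddAbove_Icc.mono (momentFiber_subset_Icc c)

lemma bddBelow_momentFiber {k : ℕ} (c : Fin k → ℝ) : BddBelow (momentFiber c) :=
  bddBelow_Icc.mono (momentFiber_subset_Icc c)

lemma momentFiber_nonempty {k : ℕ} {c : Fin k → ℝ} (hc : c ∈ Mset k) :
    (momentFiber c).Nonempty := by
  obtain ⟨ν, rfl⟩ := hc
  exact ⟨momentP ν (k + 1), ν, momVec_succ k ν⟩

lemma smul_add_smul_momentFiber_subset {k : ℕ} (c₁ c₂ : Fin k → ℝ) {a b : ℝ} (ha : 0 ≤ a)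
    (hb : 0 ≤ b) (hab : a + b = 1) :
    a • momentFiber c₁ + b • momentFiber c₂ ⊆ momentFiber (a • c₁ + b • c₂) := by
  rintro _ ⟨_, ⟨t₁, h₁, rfl⟩, _, ⟨t₂, h₂, rfl⟩, rfl⟩
  change Fin.snoc _ (a * t₁ + b * t₂) ∈ Mset (k + 1)
  rw [Fin.snoc_smul_add_smul]
  exact convex_Mset (k + 1) h₁ h₂ ha hb hab

lemma concaveOn_cplus (k : ℕ) : ConcaveOn ℝ (Mset k) cplus := by
  refine ⟨convex_Mset k, fun c₁ hc₁ c₂ hc₂ a b ha hb hab => ?_⟩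
  have hne₁ := momentFiber_nonempty hc₁
  have hne₂ := momentFiber_nonempty hc₂
  change a * sSup (momentFiber c₁) + b * sSup (momentFiber c₂) ≤ sSup (momentFiber _)
  rw [← smul_eq_mul, ← smul_eq_mul, ← Real.sSup_smul_of_nonneg ha, ← Real.sSup_smul_of_nonneg hb,
    ← csSup_add (hne₁.smul_set) ((bddAbove_momentFiber c₁).smul_of_nonneg ha)
      (hne₂.smul_set) ((bddAbove_momentFiber c₂).smul_of_nonneg hb)]
  exact csSup_le_csSup (bddAbove_momentFiber _) (hne₁.smul_set.add hne₂.smul_set)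
    (smul_add_smul_momentFiber_subset c₁ c₂ ha hb hab)

lemma convexOn_cminus (k : ℕ) : ConvexOn ℝ (Mset k) cminus := by
  refine ⟨convex_Mset k, fun c₁ hc₁ c₂ hc₂ a b ha hb hab => ?_⟩
  have hne₁ := momentFiber_nonempty hc₁
  have hne₂ := momentFiber_nonempty hc₂
  change sInf (momentFiber _) ≤ a * sInf (momentFiber c₁) + b * sInf (momentFiber c₂)
  rw [← smul_eq_mul, ← smul_eq_mul, ← Real.sInf_smul_of_nonneg ha, ← Real.sInf_smul_of_nonneg hb,
    ← csInf_add (hne₁.smul_set) ((bddBelow_momentFiber c₁).smul_of_nonneg ha)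
      (hne₂.smul_set) ((bddBelow_momentFiber c₂).smul_of_nonneg hb)]
  exact csInf_le_csInf (bddBelow_momentFiber _) (hne₁.smul_set.add hne₂.smul_set)
    (smul_add_smul_momentFiber_subset c₁ c₂ ha hb hab)

lemma concaveOn_cplus_sub_cminus (k : ℕ) :
    ConcaveOn ℝ (Mset k) fun c => cplus c - cminus c :=
  (concaveOn_cplus k).sub (convexOn_cminus k)

lemma elog_of_nonpos {x : ℝ} (hx : x ≤ 0) : elog x = ⊥ := if_pos hx

lemma elog_of_pos {x : ℝ} (hx : 0 < x) : elog x = (Real.log x : EReal) := if_neg hx.not_ge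

lemma coe_mul_neg_elog_ne_bot {a : ℝ} (ha : 0 < a) (x : ℝ) : (a : EReal) * -elog x ≠ ⊥ := by
  rcases le_or_gt x 0 with hx | hx
  · simp [elog_of_nonpos hx, EReal.coe_mul_top_of_pos ha]
  · rw [elog_of_pos hx, ← EReal.coe_neg, ← EReal.coe_mul]
    exact EReal.coe_ne_bot _

lemma neg_elog_le_of_mul_add_mul_le {a b x y z : ℝ} (ha : 0 < a) (hb : 0 < b) (hab : a + b = 1)
    (h : a * x + b * y ≤ z) :
    -elog z ≤ (a : EReal) * -elog x + (b : EReal) * -elog y := by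
  rcases le_or_gt x 0 with hx | hx
  · rw [elog_of_nonpos hx, EReal.neg_bot, EReal.coe_mul_top_of_pos ha,
      EReal.top_add_of_ne_bot (coe_mul_neg_elog_ne_bot hb y)]
    exact le_top
  rcases le_or_gt y 0 with hy | hy
  · rw [elog_of_nonpos hy, EReal.neg_bot, EReal.coe_mul_top_of_pos hb,
      EReal.add_top_of_ne_bot (coe_mul_neg_elog_ne_bot ha x)]
    exact le_top
  have hxy : 0 < a * x + b * y := by positivity
  rw [elog_of_pos (hxy.trans_le h), elog_of_pos hx, elog_of_pos hy, ← EReal.coe_neg,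
    ← EReal.coe_neg, ← EReal.coe_neg, ← EReal.coe_mul, ← EReal.coe_mul, ← EReal.coe_add,
    EReal.coe_le_coe_iff]
  have hconcave : a * Real.log x + b * Real.log y ≤ Real.log (a * x + b * y) :=
    strictConcaveOn_log_Ioi.concaveOn.2 hx hy ha.le hb.le hab
  linarith [Real.log_le_log hxy h]

section Statements
open MeasureTheory Filter Topology Matrix ProbabilityTheory
open scoped ENNReal NNReal

/-- The rate function `Ĩ` of (14) (a nondecreasing limit, here as a supremum). -/
noncomputable def Itilde (μ : ProbabilityMeasure I01) : EReal :=
  ⨆ m : ℕ, -(elog ((4 : ℝ) ^ m * (cplus (momVec m μ) - cminus (momVec m μ))))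

theorem stmt12 (μ μ₁ μ₂ : ProbabilityMeasure I01) (a b : ℝ) (ha : 0 < a) (hb : 0 < b)
    (hab : a + b = 1)
    (hmix : (μ : Measure I01) =
      ENNReal.ofReal a • (μ₁ : Measure I01) + ENNReal.ofReal b • (μ₂ : Measure I01)) :
    Itilde μ ≤ ((a : ℝ) : EReal) * Itilde μ₁ + ((b : ℝ) : EReal) * Itilde μ₂ ∧
    ∀ m : ℕ,
      a * (cplus (momVec m μ₁) - cminus (momVec m μ₁)) +
        b * (cplus (momVec m μ₂) - cminus (momVec m μ₂)) ≤
      cplus (momVec m μ) - cminus (momVec m μ) := by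
  have hwidth : ∀ m : ℕ,
      a * (cplus (momVec m μ₁) - cminus (momVec m μ₁)) +
        b * (cplus (momVec m μ₂) - cminus (momVec m μ₂)) ≤
      cplus (momVec m μ) - cminus (momVec m μ) := fun m => by
    rw [momVec_eq_of_mix ha.le hb.le hmix m]
    exact (concaveOn_cplus_sub_cminus m).2 ⟨μ₁, rfl⟩ ⟨μ₂, rfl⟩ ha.le hb.le hab
  refine ⟨iSup_le fun m => ?_, hwidth⟩
  calc -elog ((4 : ℝ) ^ m * (cplus (momVec m μ) - cminus (momVec m μ)))
      ≤ (a : EReal) * -elog ((4 : ℝ) ^ m * (cplus (momVec m μ₁) - cminus (momVec m μ₁))) +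
          (b : EReal) * -elog ((4 : ℝ) ^ m * (cplus (momVec m μ₂) - cminus (momVec m μ₂))) :=
        neg_elog_le_of_mul_add_mul_le ha hb hab
          (by nlinarith [hwidth m, pow_pos (four_pos : (0 : ℝ) < 4) m])
    _ ≤ (a : EReal) * Itilde μ₁ + (b : EReal) * Itilde μ₂ := by
        gcongr <;> exact le_iSup (fun n : ℕ =>
          -elog ((4 : ℝ) ^ n * (cplus (momVec n _) - cminus (momVec n _)))) m

end Statements
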